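/- Let M = diag(μ_j) with μ_j ≥ 0 and ∑_j μ_j < ∞, Σ ⪰ (1/B)·I a positive semidefinite operator on ℓ², and λ > 0. Then trace( M^{1/2}(M^{1/2} Σ M^{1/2} + λI)^{−1} M^{1/2} ) ≤ ∑_{j=1}^∞ μ_j/(μ_j/B + λ). -/

import Mathlib

/-!
Put `v = (M^{1/2} Σ M^{1/2} + λ)⁻¹ M^{1/2} e_j`. The `j`-th diagonal entry is
`⟪M^{1/2} e_j, v⟫ = √μ_j v_j`, and pairing the resolvent equation with `v` gives
`⟪M^{1/2} e_j, v⟫ = ⟪Σ M^{1/2} v, M^{1/2} v⟫ + λ ‖v‖² ≥ (μ_j / B + λ) v_j²`.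
So `t = v_j` satisfies `c t² ≤ √μ_j t` with `c = μ_j / B + λ`, and AM–GM turns this into
`√μ_j t ≤ μ_j / c`. Summing over `j` gives the bound.
-/

noncomputable abbrev H12 : Type := lp (fun _ : ℕ => ℝ) 2

theorem mul_le_sq_div_of_mul_sq_le {c s t : ℝ} (hc : 0 < c) (h : c * t ^ 2 ≤ s * t) :
    s * t ≤ s ^ 2 / c := by
  rw [le_div_iff₀ hc]
  nlinarith [sq_nonneg (s - c * t)]

theorem tsum_le_tsum_of_summable_right {ι : Type*} {f g : ι → ℝ} (h : ∀ i, f i ≤ g i)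
    (hg_nonneg : ∀ i, 0 ≤ g i) (hg : Summable g) : ∑' i, f i ≤ ∑' i, g i := by
  by_cases hf : Summable f
  · exact hf.tsum_le_tsum h hg
  · rw [tsum_eq_zero_of_not_summable hf]
    exact tsum_nonneg hg_nonneg

section Resolvent

variable {E : Type*} [NormedAddCommGroup E] [InnerProductSpace ℝ E]

theorem inner_resolvent_lower_bound {A S : E →ₗ[ℝ] E} (hA : A.IsSymmetric) {κ lam : ℝ}
    (hS : ∀ w, κ * ‖w‖ ^ 2 ≤ inner ℝ w (S w)) {u v : E} (hv : A (S (A v)) + lam • v = u) :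
    κ * ‖A v‖ ^ 2 + lam * ‖v‖ ^ 2 ≤ inner ℝ u v := by
  have hu : inner ℝ u v = inner ℝ (A v) (S (A v)) + lam * ‖v‖ ^ 2 := by
    rw [← hv, inner_add_left, real_inner_smul_left, hA, real_inner_comm,
      real_inner_self_eq_norm_sq]
  linarith [hS (A v)]

end Resolvent

namespace lp

variable {ι : Type*}

theorem sq_apply_le_norm_sq (x : lp (fun _ : ι => ℝ) 2) (i : ι) : x i ^ 2 ≤ ‖x‖ ^ 2 := by
  simpa [sq_abs] using pow_le_pow_left₀ (norm_nonneg _) (norm_apply_le_norm two_ne_zero x i) 2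

variable {D : lp (fun _ : ι => ℝ) 2 →L[ℝ] lp (fun _ : ι => ℝ) 2} {d : ι → ℝ}

theorem isSymmetric_of_diagonal (hD : ∀ v i, D v i = d i * v i) :
    (D : lp (fun _ : ι => ℝ) 2 →ₗ[ℝ] lp (fun _ : ι => ℝ) 2).IsSymmetric := by
  intro x y
  simp only [ContinuousLinearMap.coe_coe, inner_eq_tsum, RCLike.inner_apply, conj_trivial, hD]
  exact tsum_congr fun i => by ring

theorem diagonal_apply_eq_inner [DecidableEq ι] (hD : ∀ v i, D v i = d i * v i)
    (v : lp (fun _ : ι => ℝ) 2) (j : ι) : D v j = inner ℝ (D (lp.single 2 j 1)) v := by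
  rw [← ContinuousLinearMap.coe_coe, isSymmetric_of_diagonal hD, inner_single_left]
  simp

theorem diagonal_resolvent_apply_le [DecidableEq ι] (hD : ∀ v i, D v i = d i * v i)
    {S : lp (fun _ : ι => ℝ) 2 →L[ℝ] lp (fun _ : ι => ℝ) 2} {κ lam : ℝ} (hκ : 0 ≤ κ)
    (hlam : 0 ≤ lam) (hS : ∀ w, κ * ‖w‖ ^ 2 ≤ inner ℝ w (S w)) {v : lp (fun _ : ι => ℝ) 2}
    {j : ι} (hv : D (S (D v)) + lam • v = D (lp.single 2 j 1)) (hc : 0 < κ * d j ^ 2 + lam) :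
    D v j ≤ d j ^ 2 / (κ * d j ^ 2 + lam) := by
  have hquad := inner_resolvent_lower_bound (isSymmetric_of_diagonal hD) hS hv
  rw [ContinuousLinearMap.coe_coe, ← diagonal_apply_eq_inner hD] at hquad
  have hDv : (D v j) ^ 2 ≤ ‖D v‖ ^ 2 := sq_apply_le_norm_sq _ j
  have hv_sq : v j ^ 2 ≤ ‖v‖ ^ 2 := sq_apply_le_norm_sq v j
  rw [hD] at hquad hDv ⊢
  refine mul_le_sq_div_of_mul_sq_le hc ?_
  nlinarith [mul_le_mul_of_nonneg_left hDv hκ, mul_le_mul_of_nonneg_left hv_sq hlam]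

end lp

theorem trace_resolvent_bound_of_lower_general
    (μ : ℕ → ℝ) (B lam : ℝ)
    (hμ : ∀ j, 0 ≤ μ j) (hμ_summable : Summable μ)
    (hB : 1 ≤ B) (hlam : 0 < lam)
    (Sig sqrtM Binv : H12 →L[ℝ] H12)
    -- M^{1/2} is the diagonal operator with entries √μ_j
    (hsqrtM : ∀ (v : H12) (j : ℕ), (sqrtM v) j = Real.sqrt (μ j) * v j)
    -- Σ is self-adjoint and Σ ⪰ (1/B)·I
    (hSig_lb : ∀ v : H12, (1 / B) * ‖v‖ ^ 2 ≤ (inner ℝ v (Sig v) : ℝ))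
    -- Binv is a two-sided inverse of M^{1/2} Σ M^{1/2} + λ I
    (hBinv_right : ∀ v : H12, sqrtM (Sig (sqrtM (Binv v))) + lam • Binv v = v) :
    (∑' j : ℕ, (sqrtM (Binv (sqrtM (lp.single 2 j (1 : ℝ))))) j)
      ≤ ∑' j : ℕ, μ j / (μ j / B + lam) := by
  have hB0 : 0 < B := by linarith
  have hc : ∀ j, 0 < μ j / B + lam := fun j => by positivity [hμ j]
  have hterm : ∀ j, sqrtM (Binv (sqrtM (lp.single 2 j 1))) j ≤ μ j / (μ j / B + lam) := by
    intro j
    have h := lp.diagonal_resolvent_apply_le hsqrtM (one_div_nonneg.2 hB0.le) hlam.le hSig_lb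
      (hBinv_right _) (by rw [Real.sq_sqrt (hμ j), one_div_mul_eq_div]; exact hc j)
    rwa [Real.sq_sqrt (hμ j), one_div_mul_eq_div] at h
  have hsummable : Summable fun j => μ j / (μ j / B + lam) :=
    (hμ_summable.div_const lam).of_nonneg_of_le (fun j => div_nonneg (hμ j) (hc j).le)
      fun j => div_le_div_of_nonneg_left (hμ j) hlam (by linarith [div_nonneg (hμ j) hB0.le])
  exact tsum_le_tsum_of_summable_right hterm (fun j => div_nonneg (hμ j) (hc j).le) hsummable

/-- For M = diag(μ_j) with μ_j ≥ 0 trace-class, Σ ⪰ (1/B)·I positive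
semidefinite, and λ > 0:
trace(M^{1/2}(M^{1/2} Σ M^{1/2} + λ I)^{-1} M^{1/2}) ≤ ∑_j μ_j/(μ_j/B + λ).
The trace is the sum of diagonal entries in the standard basis. -/
theorem trace_resolvent_bound_of_lower
    (μ : ℕ → ℝ) (B lam : ℝ)
    (hμ : ∀ j, 0 ≤ μ j) (hμ_summable : Summable μ)
    (hB : 1 ≤ B) (hlam : 0 < lam)
    (Sig sqrtM Binv : H12 →L[ℝ] H12)
    -- M^{1/2} is the diagonal operator with entries √μ_j
    (hsqrtM : ∀ (v : H12) (j : ℕ), (sqrtM v) j = Real.sqrt (μ j) * v j)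
    -- Σ is self-adjoint and Σ ⪰ (1/B)·I
    (hSig_sa : ∀ v w : H12, (inner ℝ (Sig v) w : ℝ) = inner ℝ v (Sig w))
    (hSig_lb : ∀ v : H12, (1 / B) * ‖v‖ ^ 2 ≤ (inner ℝ v (Sig v) : ℝ))
    -- Binv is a two-sided inverse of M^{1/2} Σ M^{1/2} + λ I
    (hBinv_left : ∀ v : H12, Binv (sqrtM (Sig (sqrtM v)) + lam • v) = v)
    (hBinv_right : ∀ v : H12, sqrtM (Sig (sqrtM (Binv v))) + lam • Binv v = v) :
    (∑' j : ℕ, (sqrtM (Binv (sqrtM (lp.single 2 j (1 : ℝ))))) j)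
      ≤ ∑' j : ℕ, μ j / (μ j / B + lam) :=
  trace_resolvent_bound_of_lower_general μ B lam hμ hμ_summable hB hlam Sig sqrtM Binv hsqrtM
    hSig_lb hBinv_right
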